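/- There is a constant C > 0 (depending only on α) such that for every integer n ≥ 1, the translated indicator satisfies τ_{n+1/2} 1_{[0,1]}(n+1) ≥ C·n^{−(2α+1)}; consequently τ_{n+1/2} 1_{[0,1]}(n+1) ≥ C/ω_{n+1}. -/
import Mathlib


open MeasureTheory Real Set ENNReal ComplexOrder

noncomputable section

/-- The Haar measure `ω_α(dz) = z^(2α+1) dz` of the Bessel–Kingman hypergroup,
supported on `(0, ∞)`. -/
def omegaM (α : ℝ) : Measure ℝ :=
  (volume.restrict (Set.Ioi (0:ℝ))).withDensity fun z => ENNReal.ofReal (z ^ (2*α+1))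

/-- The interval `I_{n+1} = [n, n+1)` (0-based reindexing of the paper's `I_n = [n-1, n)`). -/
def In (n : ℕ) : Set ℝ := Set.Ico (n : ℝ) ((n : ℝ) + 1)

/-- `ω_α`-measure of the `n`-th interval. -/
def wn (α : ℝ) (n : ℕ) : ℝ≥0∞ := omegaM α (In n)

/-- The discrete amalgam norm `‖f‖_{p,q}` (with the conventions of the paper for
`p = ∞` or `q = ∞`, where the corresponding integral/sum becomes a supremum). -/
def amalgamNorm (α : ℝ) (p q : ℝ≥0∞) {E : Type*} [NormedAddCommGroup E] (f : ℝ → E) : ℝ≥0∞ :=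
  let A : ℕ → ℝ≥0∞ := fun n =>
    if p = ∞ then ⨆ x ∈ In n, (‖f x‖₊ : ℝ≥0∞)
    else ((wn α n)⁻¹ * ∫⁻ x in In n, (‖f x‖₊ : ℝ≥0∞) ^ p.toReal ∂(omegaM α)) ^ (1/p.toReal)
  if q = ∞ then ⨆ n, A n
  else (∑' n, wn α n * (A n) ^ q.toReal) ^ (1/q.toReal)

/-- The constant `C_Γ = Γ(α+1)/(Γ(1/2)·Γ(α+1/2)·2^(2α-1))`. -/
def CGamma (α : ℝ) : ℝ :=
  Real.Gamma (α+1) / (Real.Gamma (1/2) * Real.Gamma (α+1/2) * (2:ℝ) ^ (2*α-1))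

/-- The Bessel–Kingman kernel `K_α(x,y,z)`. -/
def Kker (α x y z : ℝ) : ℝ :=
  CGamma α * ((z^2 - (x-y)^2) * ((x+y)^2 - z^2)) ^ (α - 1/2) / (x*y*z) ^ (2*α)

/-- The hypergroup translation `τ_y f(x)`, with the conventions `τ_0 f = f` and
`τ_y f(0) = f(y)`. -/
def tau {E : Type*} [NormedAddCommGroup E] [NormedSpace ℝ E]
    (α y : ℝ) (f : ℝ → E) (x : ℝ) : E :=
  if y = 0 then f x
  else if x = 0 then f y
  else ∫ z in |x - y|..(x + y), (Kker α x y z * z ^ (2*α+1)) • f z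

/-- The hypergroup convolution `(f ⊛ g)(x) = ∫_0^∞ f(y)·τ_y g(x)·y^(2α+1) dy`. -/
def convBK (α : ℝ) (f g : ℝ → ℂ) (x : ℝ) : ℂ :=
  ∫ y in Set.Ioi (0:ℝ), (y ^ (2*α+1)) • (f y * tau α y g x)

/-- The modified Bessel function `j_α`. -/
def jBessel (α x : ℝ) : ℝ :=
  ∑' k : ℕ, (-1)^k * Real.Gamma (α+1) / (2^(2*k) * (k.factorial : ℝ) * Real.Gamma (α + k + 1))
    * x^(2*k)

/-- The hypergroup Fourier transform `f̂(λ) = ∫_0^∞ f(x)·j_α(λx)·x^(2α+1) dx`. -/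
def fourierBK (α : ℝ) (f : ℝ → ℂ) (lam : ℝ) : ℂ :=
  ∫ x in Set.Ioi (0:ℝ), (jBessel α (lam * x) * x ^ (2*α+1)) • f x

/-- The continuous `(p,∞)`-amalgam norm
`sup_{y ≥ 0} (∫_0^∞ |f(x)|^p · τ_y 1_{[0,1]}(x) · x^(2α+1) dx)^(1/p)`. -/
def contNorm (α p : ℝ) {E : Type*} [NormedAddCommGroup E] (f : ℝ → E) : ℝ≥0∞ :=
  ⨆ y ∈ Set.Ici (0:ℝ),
    (∫⁻ x, (‖f x‖₊ : ℝ≥0∞) ^ p *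
        ENNReal.ofReal (tau α y ((Set.Icc (0:ℝ) 1).indicator 1) x) ∂(omegaM α)) ^ (1/p)

/-- The weight `ω_n = ∫_{n-1}^{n} z^(2α+1) dz`, as a real number. -/
def wIn (α : ℝ) (n : ℕ) : ℝ := ∫ z in ((n:ℝ)-1)..(n:ℝ), z ^ (2*α+1)

lemma CGamma_pos {α : ℝ} (hα : 1/2 ≤ α) : 0 < CGamma α := by
  have h1 : 0 < Real.Gamma (α+1) := Real.Gamma_pos_of_pos (by linarith)
  have h2 : 0 < Real.Gamma (1/2) := Real.Gamma_pos_of_pos (by norm_num)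
  have h3 : 0 < Real.Gamma (α+1/2) := Real.Gamma_pos_of_pos (by linarith)
  have h4 : (0:ℝ) < (2:ℝ) ^ (2*α-1) := Real.rpow_pos_of_pos (by norm_num) _
  unfold CGamma
  positivity

set_option maxHeartbeats 1000000 in
/-- Lower bound `τ_{n+1/2} 1_{[0,1]}(n+1) ≥ C·n^{-(2α+1)} ≥ C/ω_{n+1}`. -/
theorem translated_indicator_lower_bound (α : ℝ) (hα : 1/2 ≤ α) :
    ∃ C : ℝ, 0 < C ∧ ∀ n : ℕ, 1 ≤ n →
      C * (n:ℝ) ^ (-(2*α+1)) ≤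
        tau α ((n:ℝ) + 1/2) ((Set.Icc (0:ℝ) 1).indicator (1 : ℝ → ℝ)) ((n:ℝ) + 1) ∧
      C / wIn α (n+1) ≤
        tau α ((n:ℝ) + 1/2) ((Set.Icc (0:ℝ) 1).indicator (1 : ℝ → ℝ)) ((n:ℝ) + 1) := by
  have hCg := CGamma_pos hα
  have hexp1 : (0:ℝ) ≤ α - 1/2 := by linarith
  have hexp2 : (0:ℝ) ≤ 2*α+1 := by linarith
  have hexp3 : (0:ℝ) ≤ 2*α := by linarith
  refine ⟨CGamma α * (3/4 : ℝ) ^ (2*α+1) * (4:ℝ) ^ (-(2*α)) / 4, ?_, fun n hn => ?_⟩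
  · have h1 : (0:ℝ) < (3/4 : ℝ) ^ (2*α+1) := Real.rpow_pos_of_pos (by norm_num) _
    have h2 : (0:ℝ) < (4:ℝ) ^ (-(2*α)) := Real.rpow_pos_of_pos (by norm_num) _
    positivity
  set C : ℝ := CGamma α * (3/4 : ℝ) ^ (2*α+1) * (4:ℝ) ^ (-(2*α)) / 4 with hC
  have hCpos : 0 < C := by
    rw [hC]
    have h1 : (0:ℝ) < (3/4 : ℝ) ^ (2*α+1) := Real.rpow_pos_of_pos (by norm_num) _
    have h2 : (0:ℝ) < (4:ℝ) ^ (-(2*α)) := Real.rpow_pos_of_pos (by norm_num) _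
    positivity
  have hN1 : (1:ℝ) ≤ (n:ℝ) := by exact_mod_cast hn
  have hNpos : (0:ℝ) < (n:ℝ) := by linarith
  set N : ℝ := (n:ℝ) with hN
  set x : ℝ := N + 1 with hx
  set y : ℝ := N + 1/2 with hy
  have hxpos : 0 < x := by rw [hx]; linarith
  have hypos : 0 < y := by rw [hy]; linarith
  set f : ℝ → ℝ := (Set.Icc (0:ℝ) 1).indicator (1 : ℝ → ℝ) with hf
  have hf_mem : ∀ z : ℝ, z ∈ Set.Icc (0:ℝ) 1 → f z = 1 := by
    intro z hz; rw [hf]; simp [Set.indicator_of_mem hz]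
  have hf_nmem : ∀ z : ℝ, z ∉ Set.Icc (0:ℝ) 1 → f z = 0 := by
    intro z hz; rw [hf]; simp [Set.indicator_of_notMem hz]
  have hf_nonneg : ∀ z : ℝ, 0 ≤ f z := by
    intro z; rw [hf]; exact Set.indicator_nonneg (fun _ _ => by norm_num) z
  -- the main bound
  have main : C * N ^ (-(2*α+1)) ≤ tau α y f x := by
    have hy0 : y ≠ 0 := ne_of_gt hypos
    have hx0 : x ≠ 0 := ne_of_gt hxpos
    have hxy' : x - y = 1/2 := by rw [hx, hy]; ring
    have hxy2 : x + y = 2*N + 3/2 := by rw [hx, hy]; ring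
    have hxy : |x - y| = 1/2 := by rw [hxy']; norm_num
    rw [tau, if_neg hy0, if_neg hx0, hxy]
    set g : ℝ → ℝ := fun z => (Kker α x y z * z ^ (2*α+1)) • f z with hg
    have hgdef : ∀ z : ℝ, g z = Kker α x y z * z ^ (2*α+1) * f z := by
      intro z; rw [hg]; simp [smul_eq_mul]
    have hKdef : ∀ z : ℝ, Kker α x y z =
        CGamma α * ((z^2 - (x-y)^2) * ((x+y)^2 - z^2)) ^ (α - 1/2) / (x*y*z) ^ (2*α) :=
      fun z => rfl
    have h1xy : (1:ℝ) ≤ x + y := by rw [hxy2]; linarith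
    -- continuity on [1/2, 1]
    have hgcont : ContinuousOn g (Set.Icc (1/2 : ℝ) 1) := by
      have hB : Continuous fun z : ℝ => (z^2 - (x-y)^2) * ((x+y)^2 - z^2) :=
        ((continuous_pow 2).sub continuous_const).mul
          (continuous_const.sub (continuous_pow 2))
      have h1 : ContinuousOn (fun z : ℝ => ((z^2 - (x-y)^2) * ((x+y)^2 - z^2)) ^ (α - 1/2))
          (Set.Icc (1/2 : ℝ) 1) :=
        hB.continuousOn.rpow_const (fun z _ => Or.inr hexp1)
      have h2 : ContinuousOn (fun z : ℝ => (x*y*z) ^ (2*α)) (Set.Icc (1/2 : ℝ) 1) := by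
        refine (continuous_const.mul continuous_id : Continuous fun z : ℝ => x*y*z).continuousOn.rpow_const ?_
        intro z hz
        have hz1 : (1/2 : ℝ) ≤ z := hz.1
        exact Or.inl (ne_of_gt (mul_pos (mul_pos hxpos hypos) (by linarith : (0:ℝ) < z)))
      have h3 : ContinuousOn (fun z : ℝ => z ^ (2*α+1)) (Set.Icc (1/2 : ℝ) 1) := by
        refine (continuous_id'.continuousOn : ContinuousOn (fun w : ℝ => w) _).rpow_const ?_
        intro z hz
        exact Or.inl (ne_of_gt (by linarith [hz.1]))
      have hden : ∀ z ∈ Set.Icc (1/2 : ℝ) 1, (x*y*z) ^ (2*α) ≠ 0 := by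
        intro z hz
        have hz1 : (1/2 : ℝ) ≤ z := hz.1
        exact ne_of_gt (Real.rpow_pos_of_pos
          (mul_pos (mul_pos hxpos hypos) (by linarith : (0:ℝ) < z)) _)
      have hFcont : ContinuousOn (fun z : ℝ => Kker α x y z * z ^ (2*α+1))
          (Set.Icc (1/2 : ℝ) 1) := by
        have : ContinuousOn (fun z : ℝ => Kker α x y z) (Set.Icc (1/2 : ℝ) 1) := by
          have hKc : ContinuousOn (fun z : ℝ =>
              CGamma α * ((z^2 - (x-y)^2) * ((x+y)^2 - z^2)) ^ (α - 1/2) / (x*y*z) ^ (2*α))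
              (Set.Icc (1/2 : ℝ) 1) := (continuousOn_const.mul h1).div h2 hden
          exact hKc.congr (fun z _ => hKdef z)
        exact this.mul h3
      refine hFcont.congr ?_
      intro z hz
      rw [hgdef z, hf_mem z ⟨by linarith [hz.1], hz.2⟩, mul_one]
    -- integrability pieces
    have hInt12 : IntervalIntegrable g volume (1/2) (3/4) :=
      (hgcont.mono (by rw [Set.uIcc_of_le (by norm_num)]; exact
        Set.Icc_subset_Icc (le_refl _) (by norm_num))).intervalIntegrable
    have hInt34 : IntervalIntegrable g volume (3/4) 1 :=
      (hgcont.mono (by rw [Set.uIcc_of_le (by norm_num)]; exact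
        Set.Icc_subset_Icc (by norm_num) (le_refl _))).intervalIntegrable
    have hInt121 : IntervalIntegrable g volume (1/2) 1 :=
      (hgcont.mono (by rw [Set.uIcc_of_le (by norm_num)])).intervalIntegrable
    have hgzero : Set.EqOn g 0 (Set.Ioc (1:ℝ) (x+y)) := by
      intro z hz
      have : z ∉ Set.Icc (0:ℝ) 1 := fun h => absurd h.2 (not_le.mpr hz.1)
      simp only [hgdef z, hf_nmem z this, mul_zero, Pi.zero_apply]
    have hIntTail : IntervalIntegrable g volume 1 (x+y) := by
      rw [intervalIntegrable_iff, Set.uIoc_of_le h1xy]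
      exact (integrableOn_congr_fun hgzero measurableSet_Ioc).mpr integrableOn_zero
    have hTail0 : (∫ z in (1:ℝ)..(x+y), g z) = 0 := by
      rw [intervalIntegral.integral_of_le h1xy,
        setIntegral_congr_fun measurableSet_Ioc hgzero]
      simp
    have hsplit : (∫ z in (1/2 : ℝ)..(x+y), g z) = (∫ z in (1/2 : ℝ)..1, g z) := by
      rw [← intervalIntegral.integral_add_adjacent_intervals hInt121 hIntTail, hTail0,
        add_zero]
    have hgoal : (∫ z in (1/2 : ℝ)..(x+y), (Kker α x y z * z ^ (2*α+1)) • f z)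
        = (∫ z in (1/2 : ℝ)..(3/4 : ℝ), g z) + ∫ z in (3/4 : ℝ)..1, g z := by
      rw [intervalIntegral.integral_add_adjacent_intervals hInt12 hInt34, ← hsplit]
    rw [hgoal]
    -- first piece nonneg
    have hg_nonneg : ∀ z ∈ Set.Icc (1/2 : ℝ) (3/4 : ℝ), 0 ≤ g z := by
      intro z hz
      obtain ⟨hz1, hz2⟩ := hz
      have hzpos : (0:ℝ) < z := by linarith
      have hBnn : (0:ℝ) ≤ (z^2 - (x-y)^2) * ((x+y)^2 - z^2) := by
        rw [hxy', hxy2]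
        refine mul_nonneg (by nlinarith) (by nlinarith)
      rw [hgdef z, hKdef z]
      have h1 : (0:ℝ) ≤ ((z^2 - (x-y)^2) * ((x+y)^2 - z^2)) ^ (α - 1/2) :=
        Real.rpow_nonneg hBnn _
      have h2 : (0:ℝ) ≤ (x*y*z) ^ (2*α) := Real.rpow_nonneg
        (mul_pos (mul_pos hxpos hypos) hzpos).le _
      have h3 : (0:ℝ) ≤ z ^ (2*α+1) := Real.rpow_nonneg hzpos.le _
      have h4 := hf_nonneg z
      positivity
    have hpiece1 : (0:ℝ) ≤ ∫ z in (1/2 : ℝ)..(3/4 : ℝ), g z :=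
      intervalIntegral.integral_nonneg (by norm_num) hg_nonneg
    -- pointwise lower bound on [3/4, 1]
    set c : ℝ := CGamma α * ((3/4:ℝ) ^ (2*α+1) * ((4:ℝ) ^ (-(2*α)) * N ^ (-(2*α+1)))) with hc
    have hptwise : ∀ z ∈ Set.Icc (3/4 : ℝ) 1, c ≤ g z := by
      intro z hz
      obtain ⟨hz1, hz2⟩ := hz
      have hzpos : (0:ℝ) < z := by linarith
      rw [hgdef z, hf_mem z ⟨by linarith, hz2⟩, mul_one, hKdef z]
      have hA : (3/4:ℝ) ^ (2*α+1) ≤ z ^ (2*α+1) :=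
        Real.rpow_le_rpow (by norm_num) hz1 hexp2
      have hQ : N ^ (2:ℝ) ≤ (z^2 - (x-y)^2) * ((x+y)^2 - z^2) := by
        rw [hxy', hxy2, Real.rpow_two]
        have e1 : (5/16:ℝ) ≤ z^2 - (1/2)^2 := by nlinarith
        have e2 : 4*N^2 ≤ (2*N+3/2)^2 - z^2 := by nlinarith
        have e3 : (5/16:ℝ)*(4*N^2) ≤ (z^2 - (1/2)^2)*((2*N+3/2)^2 - z^2) :=
          mul_le_mul e1 e2 (by positivity) (by nlinarith)
        nlinarith [e3]
      have hBnn : (0:ℝ) ≤ (z^2 - (x-y)^2) * ((x+y)^2 - z^2) :=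
        le_trans (Real.rpow_nonneg hNpos.le _) hQ
      have hnum : N ^ (2*α-1) ≤ ((z^2 - (x-y)^2) * ((x+y)^2 - z^2)) ^ (α - 1/2) := by
        have h1 : (N ^ (2:ℝ)) ^ (α - 1/2) ≤
            ((z^2 - (x-y)^2) * ((x+y)^2 - z^2)) ^ (α - 1/2) :=
          Real.rpow_le_rpow (Real.rpow_nonneg hNpos.le _) hQ hexp1
        calc N ^ (2*α-1) = N ^ ((2:ℝ) * (α - 1/2)) := by ring_nf
          _ = (N ^ (2:ℝ)) ^ (α - 1/2) := Real.rpow_mul hNpos.le _ _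
          _ ≤ _ := h1
      have hxyzpos : (0:ℝ) < x*y*z := by positivity
      have hxyz : x*y*z ≤ 4 * N ^ (2:ℝ) := by
        rw [Real.rpow_two, hx, hy]
        nlinarith
      have hden : (x*y*z) ^ (2*α) ≤ (4:ℝ) ^ (2*α) * N ^ (4*α) := by
        have h1 : (x*y*z) ^ (2*α) ≤ (4 * N ^ (2:ℝ)) ^ (2*α) :=
          Real.rpow_le_rpow hxyzpos.le hxyz hexp3
        have h2 : ((4:ℝ) * N ^ (2:ℝ)) ^ (2*α) = (4:ℝ) ^ (2*α) * N ^ (4*α) := by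
          rw [Real.mul_rpow (by norm_num) (Real.rpow_nonneg hNpos.le _),
            ← Real.rpow_mul hNpos.le]
          ring_nf
        linarith [h2 ▸ h1]
      have hdenpos : (0:ℝ) < (x*y*z) ^ (2*α) := Real.rpow_pos_of_pos hxyzpos _
      have hden2pos : (0:ℝ) < (4:ℝ) ^ (2*α) * N ^ (4*α) :=
        mul_pos (Real.rpow_pos_of_pos (by norm_num) _) (Real.rpow_pos_of_pos hNpos _)
      have hkey : (4:ℝ) ^ (-(2*α)) * N ^ (-(2*α+1)) ≤
          ((z^2 - (x-y)^2) * ((x+y)^2 - z^2)) ^ (α - 1/2) / (x*y*z) ^ (2*α) := by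
        have heq : (4:ℝ) ^ (-(2*α)) * N ^ (-(2*α+1)) =
            N ^ (2*α-1) / ((4:ℝ) ^ (2*α) * N ^ (4*α)) := by
          rw [eq_div_iff (ne_of_gt hden2pos)]
          rw [show (4:ℝ) ^ (-(2*α)) * N ^ (-(2*α+1)) * ((4:ℝ) ^ (2*α) * N ^ (4*α)) =
            ((4:ℝ) ^ (-(2*α)) * (4:ℝ) ^ (2*α)) * (N ^ (-(2*α+1)) * N ^ (4*α)) from by ring,
            ← Real.rpow_add (by norm_num : (0:ℝ) < 4), ← Real.rpow_add hNpos]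
          norm_num
          ring_nf
        rw [heq]
        exact div_le_div₀ (Real.rpow_nonneg hBnn _) hnum hdenpos hden
      calc c = CGamma α * (((4:ℝ) ^ (-(2*α)) * N ^ (-(2*α+1))) * (3/4:ℝ) ^ (2*α+1)) := by
            rw [hc]; ring
        _ ≤ CGamma α * ((((z^2 - (x-y)^2) * ((x+y)^2 - z^2)) ^ (α - 1/2) / (x*y*z) ^ (2*α))
            * z ^ (2*α+1)) := by
            refine mul_le_mul_of_nonneg_left ?_ hCg.le
            refine mul_le_mul hkey hA (Real.rpow_nonneg (by norm_num) _) ?_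
            exact div_nonneg (Real.rpow_nonneg hBnn _) hdenpos.le
        _ = CGamma α * ((z^2 - (x-y)^2) * ((x+y)^2 - z^2)) ^ (α - 1/2) / (x*y*z) ^ (2*α)
            * z ^ (2*α+1) := by ring
    -- integrate the pointwise bound
    have hmono : (∫ _ in (3/4 : ℝ)..1, c) ≤ ∫ z in (3/4 : ℝ)..1, g z :=
      intervalIntegral.integral_mono_on (by norm_num) intervalIntegrable_const hInt34 hptwise
    have hconstval : (∫ _ in (3/4 : ℝ)..1, c) = (1/4 : ℝ) * c := by
      rw [intervalIntegral.integral_const]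
      norm_num
    have hCc : C * N ^ (-(2*α+1)) = (1/4 : ℝ) * c := by
      rw [hC, hc]; ring
    linarith [hmono, hpiece1]
  refine ⟨main, ?_⟩
  have hNpow : (0:ℝ) < N ^ (2*α+1) := Real.rpow_pos_of_pos hNpos _
  have hw : N ^ (2*α+1) ≤ wIn α (n+1) := by
    have hcast : ((n+1 : ℕ) : ℝ) = N + 1 := by rw [hN]; push_cast; ring
    rw [wIn, hcast, show N + 1 - 1 = N from by ring]
    have hintg : IntervalIntegrable (fun z : ℝ => z ^ (2*α+1)) volume N (N+1) := by
      apply ContinuousOn.intervalIntegrable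
      refine (continuous_id'.continuousOn : ContinuousOn (fun w : ℝ => w) _).rpow_const ?_
      intro z hz
      rw [Set.uIcc_of_le (by linarith)] at hz
      exact Or.inl (ne_of_gt (by linarith [hz.1]))
    have hmono2 : (∫ _ in N..(N+1), N ^ (2*α+1)) ≤ ∫ z in N..(N+1), z ^ (2*α+1) := by
      refine intervalIntegral.integral_mono_on (by linarith) intervalIntegrable_const hintg ?_
      intro z hz
      exact Real.rpow_le_rpow hNpos.le hz.1 hexp2
    rw [intervalIntegral.integral_const] at hmono2
    simpa using hmono2
  have hwpos : (0:ℝ) < wIn α (n+1) := lt_of_lt_of_le hNpow hw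
  have hdiv : C / wIn α (n+1) ≤ C * N ^ (-(2*α+1)) := by
    rw [Real.rpow_neg hNpos.le, ← div_eq_mul_inv]
    exact div_le_div_of_nonneg_left hCpos.le hNpow hw
  exact le_trans hdiv main
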